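/- arXiv:0804.2956 — 2 statements merged into one kernel-verified Lean document; each statement's English description precedes it below -/
import Mathlib

section
/- Assume G is connected with at least one edge and that all projected edge vectors P χ_(a,b) (over ordered pairs (a,b) of adjacent vertices) have the same norm c > 0. Let h = dim H, let n be twice the number of edges of G, and let X = { P χ_(a,b) / c : (a,b) an ordered pair of adjacent vertices }, so X lies on the unit sphere of H and X = −X. Then X satisfies the moment conditions of a spherical 3-design in H: (i) ∑_{x ∈ X} x = 0; (ii) for every w ∈ H, ∑_{(a,b)} ⟨P χ_(a,b)/c, w⟩² = (n/h)‖w‖², the sum over all ordered pairs of adjacent vertices; (iii) for all w₁, w₂, w₃ ∈ H, ∑_{(a,b)} ⟨P χ_(a,b)/c, w₁⟩⟨P χ_(a,b)/c, w₂⟩⟨P χ_(a,b)/c, w₃⟩ = 0. -/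
/-!
For `w ∈ H` the projection can be dropped, `⟪P χ_(a,b), w⟫ = ⟪χ_(a,b), w⟫ = 2 w(a,b)`, so
`∑_(a,b) ⟪P χ_(a,b), w⟫² = 4 ‖w‖²`: the projected edge vectors form a tight frame of `H`.
Evaluating this on an orthonormal basis of `H` and summing gives `n c² = 4 h`, which turns the
frame identity into the second moment condition. The odd moments vanish because
`P χ_(b,a) = -P χ_(a,b)`.
-/

open scoped BigOperators RealInnerProductSpace

noncomputable section

variable {V : Type*} [Fintype V] [DecidableEq V]

/-- The indicator chain `χ_(a,b)`: 1 at `(a,b)`, −1 at `(b,a)`, 0 elsewhere. -/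
def edgeChi (a b : V) : EuclideanSpace ℝ (V × V) :=
  WithLp.toLp 2 (fun p => if p = (a, b) then 1 else if p = (b, a) then -1 else 0)

/-- The cycle space `H` of a simple graph `G`: the kernel of the boundary map
restricted to the edge space `C₁`. -/
def cycleSpace (G : SimpleGraph V) : Submodule ℝ (EuclideanSpace ℝ (V × V)) where
  carrier := { f | (∀ u v : V, f (u, v) = - f (v, u)) ∧
               (∀ u v : V, ¬ G.Adj u v → f (u, v) = 0) ∧
               (∀ v : V, ∑ u : V, f (u, v) = 0) }
  add_mem' := by
    rintro f g ⟨hf1, hf2, hf3⟩ ⟨hg1, hg2, hg3⟩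
    refine ⟨fun u v => ?_, fun u v h => ?_, fun v => ?_⟩
    · show f (u, v) + g (u, v) = -(f (v, u) + g (v, u))
      rw [hf1 u v, hg1 u v]; ring
    · show f (u, v) + g (u, v) = 0
      rw [hf2 u v h, hg2 u v h]; ring
    · show ∑ u : V, (f (u, v) + g (u, v)) = 0
      rw [Finset.sum_add_distrib, hf3 v, hg3 v]; ring
  zero_mem' := by
    refine ⟨fun u v => ?_, fun u v h => ?_, fun v => ?_⟩ <;> simp
  smul_mem' := by
    rintro c f ⟨hf1, hf2, hf3⟩
    refine ⟨fun u v => ?_, fun u v h => ?_, fun v => ?_⟩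
    · show c * f (u, v) = -(c * f (v, u))
      rw [hf1 u v]; ring
    · show c * f (u, v) = 0
      rw [hf2 u v h]; ring
    · show ∑ u : V, c * f (u, v) = 0
      rw [← Finset.mul_sum, hf3 v]; ring

/-- The projected edge vector `P χ_(a,b)`, where `P` is the orthogonal projection
onto the cycle space of `G`. -/
def projEdge (G : SimpleGraph V) (a b : V) : EuclideanSpace ℝ (V × V) :=
  (Submodule.orthogonalProjectionOnto (cycleSpace G) (edgeChi a b) : EuclideanSpace ℝ (V × V))

lemma finsum_mem_eq_zero_of_neg_mem {E : Type*} [AddCommGroup E] [Module ℝ E] {X : Set E}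
    (hX : ∀ x ∈ X, -x ∈ X) : ∑ᶠ x ∈ X, x = 0 := by
  have hbij : X.BijOn Neg.neg X :=
    ⟨hX, neg_injective.injOn, fun x hx => ⟨-x, hX x hx, neg_neg x⟩⟩
  have hS : ∑ᶠ x ∈ X, x = -∑ᶠ x ∈ X, x :=
    calc ∑ᶠ x ∈ X, x = ∑ᶠ x ∈ X, -x :=
          finsum_mem_eq_of_bijOn Neg.neg hbij fun x _ => (neg_neg x).symm
      _ = -∑ᶠ x ∈ X, x := by
          rw [finsum_mem_def, finsum_mem_def, ← finsum_neg_distrib]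
          exact finsum_congr (congr_fun (Set.indicator_neg' X id))
  rw [eq_neg_iff_add_eq_zero, ← two_smul ℝ, smul_eq_zero] at hS
  exact hS.resolve_left two_ne_zero

lemma sum_norm_sq_eq_mul_finrank {E : Type*} [NormedAddCommGroup E] [InnerProductSpace ℝ E]
    [FiniteDimensional ℝ E] {ι : Type*} (s : Finset ι) (v : ι → E) (A : ℝ)
    (hv : ∀ w, ∑ i ∈ s, ⟪v i, w⟫ ^ 2 = A * ‖w‖ ^ 2) :
    ∑ i ∈ s, ‖v i‖ ^ 2 = A * Module.finrank ℝ E := by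
  let b := stdOrthonormalBasis ℝ E
  calc ∑ i ∈ s, ‖v i‖ ^ 2 = ∑ j, ∑ i ∈ s, ⟪v i, b j⟫ ^ 2 := by
        rw [Finset.sum_comm]
        exact Finset.sum_congr rfl fun i _ => (b.sum_sq_inner_left (v i)).symm
    _ = A * Module.finrank ℝ E := by
        simp [hv, b.orthonormal.1, mul_comm]

section AdjacentPairs

variable {V : Type*} [Fintype V] (G : SimpleGraph V) [DecidableRel G.Adj]

lemma sum_filter_adj_eq_zero {M : Type*} [AddCommMonoid M] (f : V × V → M)
    (hf : ∀ a b, G.Adj a b → f (a, b) + f (b, a) = 0) :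
    ∑ p ∈ Finset.univ.filter (fun p : V × V => G.Adj p.1 p.2), f p = 0 := by
  refine Finset.sum_involution (fun p _ => p.swap) (fun p hp => hf p.1 p.2 ?_)
    (fun p hp _ => ?_) (fun p hp => ?_) (fun p _ => p.swap_swap)
  all_goals simp only [Finset.mem_filter, Finset.mem_univ, true_and] at hp ⊢
  · exact hp
  · exact fun h => hp.ne (congrArg Prod.snd h)
  · exact hp.symm

lemma card_filter_adj [DecidableEq V] :
    (Finset.univ.filter (fun p : V × V => G.Adj p.1 p.2)).card = 2 * G.edgeFinset.card := by
  rw [← G.dart_card_eq_twice_card_edges, ← Finset.card_univ]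
  refine (Finset.card_bij (fun d _ => d.toProd) ?_ ?_ ?_).symm
  · simp
  · intro d₁ _ d₂ _ h
    exact SimpleGraph.Dart.toProd_injective h
  · intro p hp
    exact ⟨⟨p, (Finset.mem_filter.1 hp).2⟩, Finset.mem_univ _, rfl⟩

lemma norm_sq_eq_sum_adj {w : EuclideanSpace ℝ (V × V)} (hw : w ∈ cycleSpace G) :
    ‖w‖ ^ 2 = ∑ p ∈ Finset.univ.filter (fun p : V × V => G.Adj p.1 p.2), w p ^ 2 := by
  rw [EuclideanSpace.norm_sq_eq, Finset.sum_filter_of_ne]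
  · simp
  · rintro ⟨u, v⟩ - hp
    by_contra huv
    simp [hw.2.1 u v huv] at hp

end AdjacentPairs

section EdgeChi

variable {V : Type*} [DecidableEq V]

lemma edgeChi_eq_single_sub_single {a b : V} (hab : a ≠ b) :
    edgeChi a b = EuclideanSpace.single (a, b) 1 - EuclideanSpace.single (b, a) 1 := by
  ext p
  by_cases h₁ : p = (a, b)
  · subst h₁; simp [edgeChi, hab]
  · by_cases h₂ : p = (b, a)
    · subst h₂; simp [edgeChi, hab, Ne.symm hab]
    · simp [edgeChi, h₁, h₂]

lemma edgeChi_swap {a b : V} (hab : a ≠ b) : edgeChi b a = -edgeChi (V := V) a b := by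
  rw [edgeChi_eq_single_sub_single hab, edgeChi_eq_single_sub_single hab.symm, neg_sub]

lemma inner_edgeChi [Fintype V] {a b : V} (hab : a ≠ b) (w : EuclideanSpace ℝ (V × V)) :
    ⟪edgeChi a b, w⟫ = w (a, b) - w (b, a) := by
  simp [edgeChi_eq_single_sub_single hab, inner_sub_left, EuclideanSpace.inner_single_left]

end EdgeChi

section ProjEdge

variable {V : Type*} [Fintype V] [DecidableEq V] (G : SimpleGraph V) {a b : V}

lemma projEdge_mem (a b : V) : projEdge G a b ∈ cycleSpace G :=
  Submodule.coe_mem _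

lemma projEdge_swap (hab : a ≠ b) : projEdge G b a = -projEdge G a b := by
  simp [projEdge, edgeChi_swap hab]

lemma inner_projEdge_of_mem {w : EuclideanSpace ℝ (V × V)} (hw : w ∈ cycleSpace G) :
    ⟪projEdge G a b, w⟫ = ⟪edgeChi a b, w⟫ := by
  rw [projEdge, Submodule.coe_orthogonalProjectionOnto_apply,
    Submodule.inner_starProjection_left_eq_right, Submodule.starProjection_eq_self_iff.mpr hw]

lemma inner_projEdge_of_adj (hab : G.Adj a b) {w : EuclideanSpace ℝ (V × V)}
    (hw : w ∈ cycleSpace G) : ⟪projEdge G a b, w⟫ = 2 * w (a, b) := by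
  rw [inner_projEdge_of_mem G hw, inner_edgeChi hab.ne, hw.1 b a]
  ring

variable [DecidableRel G.Adj]

lemma sum_inner_projEdge_sq {w : EuclideanSpace ℝ (V × V)} (hw : w ∈ cycleSpace G) :
    ∑ p ∈ Finset.univ.filter (fun p : V × V => G.Adj p.1 p.2), ⟪projEdge G p.1 p.2, w⟫ ^ 2 =
      4 * ‖w‖ ^ 2 := by
  rw [norm_sq_eq_sum_adj G hw, Finset.mul_sum]
  refine Finset.sum_congr rfl fun p hp => ?_
  rw [inner_projEdge_of_adj G (Finset.mem_filter.1 hp).2 hw]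
  ring

lemma sum_norm_projEdge_sq :
    ∑ p ∈ Finset.univ.filter (fun p : V × V => G.Adj p.1 p.2), ‖projEdge G p.1 p.2‖ ^ 2 =
      4 * Module.finrank ℝ (cycleSpace G) := by
  let v : V × V → cycleSpace G := fun p => ⟨projEdge G p.1 p.2, projEdge_mem G p.1 p.2⟩
  have := sum_norm_sq_eq_mul_finrank (Finset.univ.filter (fun p : V × V => G.Adj p.1 p.2)) v 4
    fun w => by simpa [v] using sum_inner_projEdge_sq G w.2
  simpa [v] using this

end ProjEdge

theorem equal_norms_imp_design_moments_general
    {V : Type*} [Fintype V] [DecidableEq V] (G : SimpleGraph V) [DecidableRel G.Adj]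
    (c : ℝ)
    (hnorm : ∀ a b : V, G.Adj a b → ‖projEdge G a b‖ = c)
    (h n : ℕ) (hh : h = Module.finrank ℝ (cycleSpace G))
    (hn : n = 2 * G.edgeFinset.card)
    (X : Set (EuclideanSpace ℝ (V × V)))
    (hX : X = { x | ∃ a b : V, G.Adj a b ∧ x = c⁻¹ • projEdge G a b }) :
    (∑ᶠ x ∈ X, x = 0) ∧
    (∀ w ∈ cycleSpace G,
      ∑ p ∈ Finset.univ.filter (fun p : V × V => G.Adj p.1 p.2),
        (⟪c⁻¹ • projEdge G p.1 p.2, w⟫) ^ 2 = ((n : ℝ) / (h : ℝ)) * ‖w‖ ^ 2) ∧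
    (∀ w₁ ∈ cycleSpace G, ∀ w₂ ∈ cycleSpace G, ∀ w₃ ∈ cycleSpace G,
      ∑ p ∈ Finset.univ.filter (fun p : V × V => G.Adj p.1 p.2),
        ⟪c⁻¹ • projEdge G p.1 p.2, w₁⟫ * ⟪c⁻¹ • projEdge G p.1 p.2, w₂⟫ *
          ⟪c⁻¹ • projEdge G p.1 p.2, w₃⟫ = 0) := by
  have hsize : (n : ℝ) * c ^ 2 = 4 * h := by
    rw [hn, hh, ← sum_norm_projEdge_sq, ← card_filter_adj,
      Finset.sum_congr rfl fun p hp => by rw [hnorm p.1 p.2 (Finset.mem_filter.1 hp).2],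
      Finset.sum_const, nsmul_eq_mul]
  refine ⟨finsum_mem_eq_zero_of_neg_mem ?_, fun w hw => ?_, fun w₁ _ w₂ _ w₃ _ => ?_⟩
  · rw [hX]
    rintro _ ⟨a, b, hab, rfl⟩
    exact ⟨b, a, hab.symm, by rw [projEdge_swap G hab.ne, smul_neg]⟩
  · simp_rw [real_inner_smul_left, mul_pow, ← Finset.mul_sum, sum_inner_projEdge_sq G hw]
    rcases eq_or_ne h 0 with h0 | h0
    · -- `n / 0 = 0`, but then `H = 0`, so `w = 0`
      rw [hh, Submodule.finrank_eq_zero] at h0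
      simp [show w = 0 by simpa [h0] using hw]
    · have hc : c ≠ 0 := by
        rintro rfl
        exact h0 (by exact_mod_cast (by simpa using hsize.symm : (h : ℝ) = 0))
      field_simp
      linear_combination -‖w‖ ^ 2 * hsize
  · refine sum_filter_adj_eq_zero G _ fun a b hab => ?_
    simp only [projEdge_swap G hab.ne, smul_neg, inner_neg_left]
    ring

/-- **Lemma 1.2, forward direction.** If all projected edge vectors of a connected graph
have the same norm `c > 0`, then the normalized vectors satisfy the first, second and
third moment conditions of a spherical 3-design in the cycle space `H`. -/
theorem equal_norms_imp_design_moments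
    {V : Type*} [Fintype V] [DecidableEq V] (G : SimpleGraph V) [DecidableRel G.Adj]
    (hconn : G.Connected) (hne : ∃ a b : V, G.Adj a b)
    (c : ℝ) (hc : 0 < c)
    (hnorm : ∀ a b : V, G.Adj a b → ‖projEdge G a b‖ = c)
    (h n : ℕ) (hh : h = Module.finrank ℝ (cycleSpace G))
    (hn : n = 2 * G.edgeFinset.card)
    (X : Set (EuclideanSpace ℝ (V × V)))
    (hX : X = { x | ∃ a b : V, G.Adj a b ∧ x = c⁻¹ • projEdge G a b }) :
    (∑ᶠ x ∈ X, x = 0) ∧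
    (∀ w ∈ cycleSpace G,
      ∑ p ∈ Finset.univ.filter (fun p : V × V => G.Adj p.1 p.2),
        (⟪c⁻¹ • projEdge G p.1 p.2, w⟫) ^ 2 = ((n : ℝ) / (h : ℝ)) * ‖w‖ ^ 2) ∧
    (∀ w₁ ∈ cycleSpace G, ∀ w₂ ∈ cycleSpace G, ∀ w₃ ∈ cycleSpace G,
      ∑ p ∈ Finset.univ.filter (fun p : V × V => G.Adj p.1 p.2),
        ⟪c⁻¹ • projEdge G p.1 p.2, w₁⟫ * ⟪c⁻¹ • projEdge G p.1 p.2, w₂⟫ *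
          ⟪c⁻¹ • projEdge G p.1 p.2, w₃⟫ = 0) :=
  equal_norms_imp_design_moments_general G c hnorm h n hh hn X hX

end
end

section
/- Let m ≥ 5 and let G be the complete graph on a finite vertex set V with |V| = m. Fix an ordered pair (a,b) of distinct vertices and for each ordered pair (c,d) of distinct vertices let ι(c,d) = ⟨P χ_(a,b), P χ_(c,d)⟩ / (‖P χ_(a,b)‖·‖P χ_(c,d)‖). Then among the m(m−1) ordered pairs (c,d): exactly 1 has ι = 1 (namely (a,b) itself), exactly 1 has ι = −1 (namely (b,a)), exactly 2(m−2) have ι = 1/(m−2), exactly 2(m−2) have ι = −1/(m−2), and exactly (m−2)(m−3) have ι = 0. -/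
open scoped BigOperators RealInnerProductSpace

noncomputable section

variable {V : Type*} [Fintype V] [DecidableEq V]

/-!
On `K_n` every antisymmetric `f` splits as a cycle plus a coboundary `δh (u, v) = h v - h u`:
coboundaries are orthogonal to cycles, and `∂ (δh) = n h` whenever `∑ h = 0`, so the projection
onto the cycle space is `f ↦ f - n⁻¹ δ(∂f)`. Since the projection is self-adjoint,
`⟪Pχ_(a,b), Pχ_(c,d)⟫ = ⟪χ_(a,b), Pχ_(c,d)⟫ = 2 Pχ_(c,d)(a, b)`; in particular all `Pχ_(c,d)` have
the same norm and the normalized inner product is `Pχ_(c,d)(a, b) / Pχ_(a,b)(a, b)`. Evaluating the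
explicit formula, this is `±1` for `(a, b)` and `(b, a)`, `1/(n-2)` when one edge continues the
other as a directed path, `-1/(n-2)` when they share their tail or their head, and `0` for disjoint
edges; counting these configurations gives the distribution.
-/

section EdgeSpace

variable {V : Type*}

def vertexCoboundary (h : V → ℝ) : EuclideanSpace ℝ (V × V) :=
  WithLp.toLp 2 fun p => h p.2 - h p.1

variable [Fintype V]

def edgeBoundary (f : EuclideanSpace ℝ (V × V)) (v : V) : ℝ := ∑ u, f (u, v)

lemma sum_apply_left_eq_zero_of_mem_cycleSpace {G : SimpleGraph V}
    {w : EuclideanSpace ℝ (V × V)} (hw : w ∈ cycleSpace G) (u : V) : ∑ v, w (u, v) = 0 := by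
  simp_rw [hw.1 u, Finset.sum_neg_distrib, hw.2.2 u, neg_zero]

lemma inner_vertexCoboundary_eq_zero_of_mem_cycleSpace {G : SimpleGraph V} (h : V → ℝ)
    {w : EuclideanSpace ℝ (V × V)} (hw : w ∈ cycleSpace G) : ⟪vertexCoboundary h, w⟫ = 0 := by
  simp only [PiLp.inner_apply, RCLike.inner_apply, conj_trivial, vertexCoboundary,
    Fintype.sum_prod_type, mul_sub, Finset.sum_sub_distrib]
  rw [Finset.sum_comm]
  simp_rw [← Finset.sum_mul]
  simp [hw.2.2, sum_apply_left_eq_zero_of_mem_cycleSpace hw]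

lemma sum_edgeBoundary_eq_zero {f : EuclideanSpace ℝ (V × V)}
    (hf : ∀ u v, f (u, v) = -f (v, u)) : ∑ v, edgeBoundary f v = 0 := by
  have h : ∑ v, ∑ u, f (u, v) = -∑ v, ∑ u, f (u, v) :=
    calc ∑ v, ∑ u, f (u, v) = ∑ v, ∑ u, -f (v, u) :=
          Finset.sum_congr rfl fun v _ => Finset.sum_congr rfl fun u _ => hf u v
      _ = -∑ v, ∑ u, f (u, v) := by
          rw [Finset.sum_comm]; simp only [Finset.sum_neg_distrib]
  simp only [edgeBoundary]
  linarith

lemma sub_smul_vertexCoboundary_mem_cycleSpace_top {f : EuclideanSpace ℝ (V × V)}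
    (hf : ∀ u v, f (u, v) = -f (v, u)) :
    f - (Fintype.card V : ℝ)⁻¹ • vertexCoboundary (edgeBoundary f) ∈ cycleSpace ⊤ := by
  refine ⟨fun u v => ?_, fun u v huv => ?_, fun v => ?_⟩
  · simp only [PiLp.sub_apply, PiLp.smul_apply, vertexCoboundary, smul_eq_mul, hf u v]
    ring
  · obtain rfl : u = v := by simpa using huv
    simp [vertexCoboundary, CharZero.eq_neg_self_iff.mp (hf u u)]
  · have hcard : (Fintype.card V : ℝ) ≠ 0 := by
      have : Nonempty V := ⟨v⟩
      positivity
    simp only [PiLp.sub_apply, PiLp.smul_apply, vertexCoboundary, smul_eq_mul,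
      Finset.sum_sub_distrib, ← Finset.mul_sum, Finset.sum_const, Finset.card_univ,
      nsmul_eq_mul, sum_edgeBoundary_eq_zero hf]
    simp only [edgeBoundary]
    field_simp
    ring

lemma starProjection_cycleSpace_top {f : EuclideanSpace ℝ (V × V)}
    (hf : ∀ u v, f (u, v) = -f (v, u)) :
    (cycleSpace ⊤).starProjection f =
      f - (Fintype.card V : ℝ)⁻¹ • vertexCoboundary (edgeBoundary f) := by
  refine Submodule.eq_starProjection_of_mem_of_inner_eq_zero
    (sub_smul_vertexCoboundary_mem_cycleSpace_top hf) fun w hw => ?_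
  rw [sub_sub_cancel, inner_smul_left, inner_vertexCoboundary_eq_zero_of_mem_cycleSpace _ hw,
    mul_zero]

end EdgeSpace

section EdgeChi

variable {V : Type*} [DecidableEq V] {a b : V}

lemma edgeChi_apply_of_ne (hab : a ≠ b) (p : V × V) :
    edgeChi a b p = (if p = (a, b) then 1 else 0) - if p = (b, a) then 1 else 0 := by
  have : (a, b) ≠ (b, a) := by simp [hab]
  unfold edgeChi
  split_ifs <;> simp_all

lemma edgeChi_apply_swap (hab : a ≠ b) (u v : V) : edgeChi a b (u, v) = -edgeChi a b (v, u) := by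
  simp only [edgeChi_apply_of_ne hab, Prod.mk.injEq]
  split_ifs <;> grind

variable [Fintype V]

lemma edgeBoundary_edgeChi (hab : a ≠ b) :
    edgeBoundary (edgeChi a b) = fun v => (if v = b then 1 else 0) - if v = a then 1 else 0 := by
  ext v
  simp [edgeBoundary, edgeChi_apply_of_ne hab, Finset.sum_sub_distrib, Prod.ext_iff, ite_and]

lemma inner_edgeChi_of_antisymm (hab : a ≠ b) {w : EuclideanSpace ℝ (V × V)}
    (hw : ∀ u v, w (u, v) = -w (v, u)) : ⟪edgeChi a b, w⟫ = 2 * w (a, b) := by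
  simp only [PiLp.inner_apply, edgeChi_apply_of_ne hab, RCLike.inner_apply, Real.ringHom_apply,
    mul_sub, mul_ite, mul_one, mul_zero, Finset.sum_sub_distrib, Finset.sum_ite_eq',
    Finset.mem_univ, ↓reduceIte, hw b a, sub_neg_eq_add]
  ring

end EdgeChi

section ProjEdge

variable {V : Type*} [Fintype V] [DecidableEq V] {a b : V}

lemma inner_projEdge (G : SimpleGraph V) (hab : a ≠ b) (c d : V) :
    ⟪projEdge G a b, projEdge G c d⟫ = 2 * projEdge G c d (a, b) := by
  rw [projEdge, projEdge, ← Submodule.coe_inner,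
    Submodule.inner_orthogonalProjectionOnto_eq_of_mem_right]
  exact inner_edgeChi_of_antisymm hab ((cycleSpace G).orthogonalProjectionOnto (edgeChi c d)).2.1

lemma projEdge_top_apply (hab : a ≠ b) (u v : V) :
    projEdge ⊤ a b (u, v) = edgeChi a b (u, v) -
      ((if v = b then 1 else 0) - (if v = a then 1 else 0) -
        ((if u = b then 1 else 0) - if u = a then 1 else 0)) / Fintype.card V := by
  rw [projEdge, ← Submodule.starProjection_apply,
    starProjection_cycleSpace_top (edgeChi_apply_swap hab), edgeBoundary_edgeChi hab]
  simp [vertexCoboundary, div_eq_inv_mul]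

lemma projEdge_top_apply_self (hab : a ≠ b) :
    projEdge ⊤ a b (a, b) = 1 - 2 / Fintype.card V := by
  simp only [projEdge_top_apply hab, edgeChi_apply_of_ne hab, ↓reduceIte, Prod.mk.injEq, hab,
    hab.symm, and_self, sub_zero, zero_sub, sub_neg_eq_add, sub_right_inj]
  ring

lemma norm_projEdge_top (hab : a ≠ b) :
    ‖projEdge ⊤ a b‖ = √(2 * (1 - 2 / Fintype.card V)) := by
  rw [norm_eq_sqrt_real_inner, inner_projEdge ⊤ hab, projEdge_top_apply_self hab]

lemma inner_div_norm_mul_norm_projEdge_top {c d : V} (hab : a ≠ b) (hcd : c ≠ d) :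
    ⟪projEdge ⊤ a b, projEdge ⊤ c d⟫ / (‖projEdge ⊤ a b‖ * ‖projEdge ⊤ c d‖) =
      projEdge ⊤ c d (a, b) / projEdge ⊤ a b (a, b) := by
  rw [norm_projEdge_top hcd, ← norm_projEdge_top hab, ← real_inner_self_eq_norm_mul_norm,
    inner_projEdge ⊤ hab, inner_projEdge ⊤ hab, mul_div_mul_left _ _ two_ne_zero]

end ProjEdge

section CosineProfile

variable {V : Type*} [DecidableEq V]

def edgeCosineProfile (a b : V) (t : ℝ) (p : V × V) : ℝ :=
  if p = (a, b) then 1 else if p = (b, a) then -1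
  else if p.1 = b ∨ p.2 = a then t else if p.1 = a ∨ p.2 = b then -t else 0

variable [Fintype V] {a b : V}

lemma projEdge_top_apply_div_self {c d : V} (hab : a ≠ b) (hcd : c ≠ d)
    (hV : 3 ≤ Fintype.card V) :
    projEdge ⊤ c d (a, b) / projEdge ⊤ a b (a, b) =
      edgeCosineProfile a b (1 / (Fintype.card V - 2)) (c, d) := by
  have hn : (3 : ℝ) ≤ Fintype.card V := by exact_mod_cast hV
  rw [projEdge_top_apply_self hab, projEdge_top_apply hcd, edgeChi_apply_of_ne hcd]
  have hn2 : (Fintype.card V : ℝ) - 2 ≠ 0 := by linarith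
  by_cases hac : a = c <;> by_cases hbc : b = c <;> by_cases had : a = d <;>
    by_cases hbd : b = d <;>
    simp_all [edgeCosineProfile, eq_comm] <;> field_simp <;> ring

end CosineProfile

section Counting

variable {V : Type*} [DecidableEq V]

lemma card_singleton_product_union_product_singleton {x y : V} {s : Finset V} (hx : x ∉ s) :
    (({x} : Finset V) ×ˢ s ∪ s ×ˢ ({y} : Finset V)).card = 2 * s.card := by
  rw [Finset.card_union_of_disjoint, Finset.card_product, Finset.card_product,
    Finset.card_singleton, Finset.card_singleton]
  · ring
  · rw [Finset.disjoint_left]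
    rintro ⟨u, v⟩ h₁ h₂
    simp only [Finset.mem_product, Finset.mem_singleton] at h₁ h₂
    exact hx (h₁.1 ▸ h₂.1)

variable [Fintype V] {a b : V} {t : ℝ}

lemma card_compl_pair (hab : a ≠ b) : ({a, b}ᶜ : Finset V).card = Fintype.card V - 2 := by
  rw [Finset.card_compl, Finset.card_pair hab]

lemma filter_edgeCosineProfile_eq_one (hab : a ≠ b) (ht : 0 < t) (ht' : t < 1) :
    Finset.univ.filter (fun p : V × V => p.1 ≠ p.2 ∧ edgeCosineProfile a b t p = 1) =
      {(a, b)} := by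
  ext ⟨c, d⟩
  simp only [Finset.mem_filter, Finset.mem_univ, true_and, Finset.mem_singleton]
  grind [edgeCosineProfile]

lemma filter_edgeCosineProfile_eq_neg_one (hab : a ≠ b) (ht : 0 < t) (ht' : t < 1) :
    Finset.univ.filter (fun p : V × V => p.1 ≠ p.2 ∧ edgeCosineProfile a b t p = -1) =
      {(b, a)} := by
  ext ⟨c, d⟩
  simp only [Finset.mem_filter, Finset.mem_univ, true_and, Finset.mem_singleton]
  grind [edgeCosineProfile]

lemma filter_edgeCosineProfile_eq_pos (ht : 0 < t) (ht' : t < 1) :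
    Finset.univ.filter (fun p : V × V => p.1 ≠ p.2 ∧ edgeCosineProfile a b t p = t) =
      ({b} : Finset V) ×ˢ ({a, b}ᶜ : Finset V) ∪ ({a, b}ᶜ : Finset V) ×ˢ ({a} : Finset V) := by
  ext ⟨c, d⟩
  simp only [Finset.mem_filter, Finset.mem_univ, true_and, Finset.mem_union, Finset.mem_product,
    Finset.mem_singleton, Finset.mem_compl, Finset.mem_insert]
  grind [edgeCosineProfile]

lemma filter_edgeCosineProfile_eq_neg (hab : a ≠ b) (ht : 0 < t) (ht' : t < 1) :
    Finset.univ.filter (fun p : V × V => p.1 ≠ p.2 ∧ edgeCosineProfile a b t p = -t) =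
      ({a} : Finset V) ×ˢ ({a, b}ᶜ : Finset V) ∪ ({a, b}ᶜ : Finset V) ×ˢ ({b} : Finset V) := by
  ext ⟨c, d⟩
  simp only [Finset.mem_filter, Finset.mem_univ, true_and, Finset.mem_union, Finset.mem_product,
    Finset.mem_singleton, Finset.mem_compl, Finset.mem_insert]
  grind [edgeCosineProfile]

lemma filter_edgeCosineProfile_eq_zero (ht : 0 < t) :
    Finset.univ.filter (fun p : V × V => p.1 ≠ p.2 ∧ edgeCosineProfile a b t p = 0) =
      ({a, b}ᶜ : Finset V).offDiag := by
  ext ⟨c, d⟩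
  simp only [Finset.mem_filter, Finset.mem_univ, true_and, Finset.mem_offDiag,
    Finset.mem_compl, Finset.mem_insert, Finset.mem_singleton]
  grind [edgeCosineProfile]

end Counting

open Classical in
/-- **Section 6.4: distance distribution for the complete graph `K_m`.** Fix an ordered
pair `(a,b)` of distinct vertices. Among the `m(m−1)` ordered pairs `(c,d)` of distinct
vertices, exactly 1 has normalized inner product `1` with `(a,b)`, exactly 1 has `−1`,
exactly `2(m−2)` have `1/(m−2)`, exactly `2(m−2)` have `−1/(m−2)`, and exactly
`(m−2)(m−3)` have `0`. -/
theorem completeGraph_inner_distribution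
    {V : Type*} [Fintype V] [DecidableEq V] (m : ℕ) (hm : 5 ≤ m)
    (hcard : Fintype.card V = m)
    (G : SimpleGraph V) (hG : G = (⊤ : SimpleGraph V))
    (a b : V) (hab : a ≠ b)
    (ι : V × V → ℝ)
    (hι : ∀ p : V × V, ι p =
      ⟪projEdge G a b, projEdge G p.1 p.2⟫ / (‖projEdge G a b‖ * ‖projEdge G p.1 p.2‖)) :
    ((Finset.univ.filter fun p : V × V => p.1 ≠ p.2 ∧ ι p = 1).card = 1) ∧
    ((Finset.univ.filter fun p : V × V => p.1 ≠ p.2 ∧ ι p = -1).card = 1) ∧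
    ((Finset.univ.filter fun p : V × V => p.1 ≠ p.2 ∧ ι p = 1 / ((m : ℝ) - 2)).card
        = 2 * (m - 2)) ∧
    ((Finset.univ.filter fun p : V × V => p.1 ≠ p.2 ∧ ι p = -(1 / ((m : ℝ) - 2))).card
        = 2 * (m - 2)) ∧
    ((Finset.univ.filter fun p : V × V => p.1 ≠ p.2 ∧ ι p = 0).card = (m - 2) * (m - 3)) := by
  subst hG hcard
  set t : ℝ := 1 / ((Fintype.card V : ℝ) - 2)
  have hm' : (5 : ℝ) ≤ Fintype.card V := by exact_mod_cast hm
  have ht : 0 < t := one_div_pos.mpr (by linarith)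
  have ht' : t < 1 := by rw [div_lt_one (by linarith)]; linarith
  have hfilter (x : ℝ) : Finset.univ.filter (fun p : V × V => p.1 ≠ p.2 ∧ ι p = x) =
      Finset.univ.filter (fun p : V × V => p.1 ≠ p.2 ∧ edgeCosineProfile a b t p = x) := by
    refine Finset.filter_congr fun p _ => and_congr_right fun hp => ?_
    rw [hι, inner_div_norm_mul_norm_projEdge_top hab hp,
      projEdge_top_apply_div_self hab hp (by omega)]
  have hb : b ∉ ({a, b}ᶜ : Finset V) := by simp
  have ha : a ∉ ({a, b}ᶜ : Finset V) := by simp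
  simp only [hfilter]
  refine ⟨?_, ?_, ?_, ?_, ?_⟩
  · rw [filter_edgeCosineProfile_eq_one hab ht ht', Finset.card_singleton]
  · rw [filter_edgeCosineProfile_eq_neg_one hab ht ht', Finset.card_singleton]
  · rw [filter_edgeCosineProfile_eq_pos ht ht', card_singleton_product_union_product_singleton hb,
      card_compl_pair hab]
  · rw [filter_edgeCosineProfile_eq_neg hab ht ht',
      card_singleton_product_union_product_singleton ha, card_compl_pair hab]
  · rw [filter_edgeCosineProfile_eq_zero ht, Finset.offDiag_card, card_compl_pair hab,
      ← Nat.mul_sub_one, Nat.sub_sub]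

end
end
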